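/- arXiv:1204.5923 — 2 statements merged into one kernel-verified Lean document; each statement's English description precedes it below -/
import Mathlib

section
/- For every nonnegative integer n, the number of even-zeroed paths of length 4n (with no restriction on the total sum of steps) equals 4^n · B_n. -/
/-!
Cutting a path at its first return to the axis splits it into a first return and an arbitrary
path, so for length generating functions `P = P₀ + F P`, where `F` counts first returns and `P₀`
counts the zero-free paths with property `P`. Since `F(x) = W(x²)` and balanced paths have
generating function `B(x²)` with `B = ∑ Bₘ xᵐ`, this gives `(1 - W) B = 1`, and (using
`B² = (1 - 4x)⁻¹`) that zero-free paths of length `2m` are counted by `Bₘ`. A path is even-zeroed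
iff its first return has length divisible by `4` and the rest is even-zeroed, so with the even
part `f ↦ f₂` (`contract 2`) the counts `E(y) = ∑ e(4n) yⁿ` satisfy `(1 - W₂) E = B₂`. On the
other hand `B(x) B(-x) = B(4x²)`; multiplying `(1 - W) B = 1` by `B(-x)` and taking even parts
gives `(1 - W₂) B(4y) = B₂`, hence `E(y) = B(4y)`.
-/

/-- A path of length `l` is a sequence of `l` steps, each `+1` (up, `true`) or `-1`
(down, `false`). `psum p k` is the partial sum of the first `k` steps of `p`
(the height of the path after `k` steps). -/
def psum {l : ℕ} (p : Fin l → Bool) (k : ℕ) : ℤ :=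
  ∑ i ∈ Finset.univ.filter (fun i : Fin l => (i : ℕ) < k), (if p i then (1 : ℤ) else -1)

/-- A path is even-zeroed if every index at which its partial sum is `0`
(i.e., every `x`-intercept) is divisible by `4`. -/
def IsEvenZeroed {l : ℕ} (p : Fin l → Bool) : Prop :=
  ∀ k ≤ l, psum p k = 0 → 4 ∣ k

/-- A path of length `2m` is balanced if its total sum of steps is `0`
(equivalently, it has `m` up-steps and `m` down-steps). -/
def IsBalanced {l : ℕ} (p : Fin l → Bool) : Prop :=
  psum p l = 0

open Finset PowerSeries

namespace PowerSeries

section Contract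

variable {R : Type*} [CommRing R]

noncomputable def contract (d : ℕ) : R⟦X⟧ →ₗ[R] R⟦X⟧ where
  toFun f := mk fun n => coeff (d * n) f
  map_add' f g := by ext; simp
  map_smul' r f := by ext; simp

@[simp]
theorem coeff_contract (d n : ℕ) (f : R⟦X⟧) : coeff n (contract d f) = coeff (d * n) f := by
  simp [contract]

@[simp]
theorem constantCoeff_contract (d : ℕ) (f : R⟦X⟧) :
    constantCoeff (contract d f) = constantCoeff f := by
  rw [← coeff_zero_eq_constantCoeff_apply, coeff_contract, mul_zero,
    coeff_zero_eq_constantCoeff_apply]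

theorem contract_one {d : ℕ} (hd : d ≠ 0) : contract d (1 : R⟦X⟧) = 1 := by
  ext n
  simp [coeff_one, hd]

theorem contract_contract (a b : ℕ) (f : R⟦X⟧) :
    contract a (contract b f) = contract (b * a) f := by
  ext n
  simp [mul_assoc]

theorem contract_rescale (d : ℕ) (a : R) (f : R⟦X⟧) :
    contract d (rescale a f) = rescale (a ^ d) (contract d f) := by
  ext n
  simp [coeff_rescale, pow_mul]

theorem contract_expand {d : ℕ} (hd : d ≠ 0) (f : R⟦X⟧) : contract d (expand d hd f) = f := by
  ext n
  simp [coeff_expand_mul]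

theorem expand_contract {d : ℕ} (hd : d ≠ 0) {f : R⟦X⟧} (hf : ∀ n, ¬ d ∣ n → coeff n f = 0) :
    expand d hd (contract d f) = f := by
  ext n
  rw [coeff_expand]
  split_ifs with hn
  · rw [coeff_contract, Nat.mul_div_cancel' hn]
  · exact (hf n hn).symm

theorem contract_expand_mul {d : ℕ} (hd : d ≠ 0) (f g : R⟦X⟧) :
    contract d (expand d hd f * g) = f * contract d g := by
  ext n
  have hinj : Set.InjOn (fun x : ℕ × ℕ => (d * x.1, d * x.2)) (antidiagonal n) :=
    fun x _ y _ h => by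
      simp only [Prod.mk.injEq, Nat.mul_left_cancel_iff (Nat.pos_of_ne_zero hd)] at h
      exact Prod.ext h.1 h.2
  have hsub : (antidiagonal n).image (fun x => (d * x.1, d * x.2)) ⊆ antidiagonal (d * n) := by
    intro x hx
    obtain ⟨y, hy, rfl⟩ := mem_image.1 hx
    rw [HasAntidiagonal.mem_antidiagonal] at hy ⊢
    rw [← mul_add, hy]
  rw [coeff_contract, coeff_mul, coeff_mul, ← sum_subset hsub, sum_image hinj]
  · simp [coeff_expand_mul]
  · intro x hx hxd
    rw [coeff_expand, if_neg, zero_mul]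
    rintro ⟨i, hi⟩
    rw [HasAntidiagonal.mem_antidiagonal] at hx
    have hin : i ≤ n := Nat.le_of_mul_le_mul_left (by omega) (Nat.pos_of_ne_zero hd)
    refine hxd (mem_image.2 ⟨(i, n - i), ?_, ?_⟩)
    · rw [HasAntidiagonal.mem_antidiagonal]
      omega
    · ext
      · exact hi.symm
      · simp only [Nat.mul_sub, ← hi]
        omega

end Contract

noncomputable def centralBinomSeries : ℤ⟦X⟧ := mk fun n => (n.centralBinom : ℤ)

theorem constantCoeff_centralBinomSeries : constantCoeff centralBinomSeries = 1 := by
  simp [centralBinomSeries, ← coeff_zero_eq_constantCoeff_apply]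

theorem derivative_centralBinomSeries :
    d⁄dX ℤ centralBinomSeries =
      C 2 * centralBinomSeries + C 4 * X * d⁄dX ℤ centralBinomSeries := by
  ext n
  rcases n with _ | n
  · simp [coeff_derivative, centralBinomSeries, map_ofNat, Nat.centralBinom, Nat.choose]
  · rw [map_add, mul_assoc, coeff_C_mul, coeff_C_mul, coeff_succ_X_mul]
    simp only [coeff_derivative, centralBinomSeries, coeff_mk]
    have h : ((n + 1 + 1 : ℕ) * (n + 1 + 1).centralBinom : ℤ) =
        2 * (2 * (n + 1 : ℕ) + 1) * (n + 1).centralBinom := by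
      exact_mod_cast Nat.succ_mul_centralBinom_succ (n + 1)
    push_cast at h ⊢
    linear_combination h

theorem centralBinomSeries_sq_mul : centralBinomSeries ^ 2 * (1 - C 4 * X) = 1 := by
  apply derivative.ext
  · have hD := derivative_centralBinomSeries
    rw [Derivation.leibniz, Derivation.leibniz_pow, map_sub, Derivation.leibniz, derivative_C,
      derivative_X, Derivation.map_one_eq_zero]
    simp only [map_ofNat, smul_eq_mul, nsmul_eq_mul] at hD ⊢
    linear_combination (2 * centralBinomSeries) * hD
  · simp [constantCoeff_centralBinomSeries]

theorem mk_four_pow_eq_centralBinomSeries_sq :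
    (mk fun n => (4 : ℤ) ^ n) = centralBinomSeries ^ 2 := by
  have h := congrArg (rescale (4 : ℤ)) (mk_one_mul_one_sub_eq_one ℤ)
  rw [map_mul, map_sub, map_one, rescale_mk, rescale_X] at h
  simp only [Pi.one_apply, mul_one] at h
  exact left_inv_eq_right_inv h (by rw [mul_comm]; exact centralBinomSeries_sq_mul)

theorem centralBinomSeries_mul_rescale_neg_one :
    centralBinomSeries * rescale (-1) centralBinomSeries =
      expand 2 two_ne_zero (rescale 4 centralBinomSeries) := by
  set B := centralBinomSeries
  have hB := centralBinomSeries_sq_mul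
  -- Both sides have constant term `1` and square to `(1 - 16 X²)⁻¹`.
  have hP : (B * rescale (-1) B) ^ 2 * (1 - 16 * X ^ 2) = 1 := by
    have h := congrArg₂ (· * ·) hB (congrArg (rescale (-1)) hB)
    simp only [map_mul, map_sub, map_one, map_pow, rescale_X, map_ofNat, map_neg] at h
    linear_combination h
  have hQ : (expand 2 two_ne_zero (rescale 4 B)) ^ 2 * (1 - 16 * X ^ 2) = 1 := by
    have h := congrArg (fun f => expand 2 two_ne_zero (rescale 4 f)) hB
    simp only [map_mul, map_sub, map_one, map_pow, rescale_X, map_ofNat, expand_X] at h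
    linear_combination h
  rcases sq_eq_sq_iff_eq_or_eq_neg.1 (left_inv_eq_right_inv hP (by rw [mul_comm]; exact hQ))
    with h | h
  · exact h
  · have h0 := congrArg constantCoeff h
    rw [map_mul, map_neg, constantCoeff_expand] at h0
    simp only [← coeff_zero_eq_constantCoeff_apply, coeff_rescale, B, centralBinomSeries,
      coeff_mk] at h0
    norm_num at h0

end PowerSeries

section Paths

variable {l : ℕ}

theorem psum_eq_sum_ite (p : Fin l → Bool) (k : ℕ) :
    psum p k = ∑ i : Fin l, if (i : ℕ) < k then (if p i then 1 else -1) else 0 := by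
  rw [psum, sum_filter]

theorem psum_of_length_le (p : Fin l → Bool) {k : ℕ} (hk : l ≤ k) : psum p k = psum p l := by
  simp only [psum_eq_sum_ite]
  refine sum_congr rfl fun i _ => ?_
  simp [i.isLt, lt_of_lt_of_le i.isLt hk]

theorem psum_zero (p : Fin l → Bool) : psum p 0 = 0 := by
  simp [psum]

theorem psum_append {a b : ℕ} (q : Fin a → Bool) (r : Fin b → Bool) (k : ℕ) :
    psum (Fin.append q r) k = psum q k + psum r (k - a) := by
  simp only [psum_eq_sum_ite, Fin.sum_univ_add, Fin.append_left, Fin.append_right,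
    Fin.val_castAdd, Fin.val_natAdd]
  congr 1
  refine sum_congr rfl fun j _ => ?_
  congr 1
  exact propext (by omega)

theorem psum_append_of_le {a b : ℕ} (q : Fin a → Bool) (r : Fin b → Bool) {k : ℕ} (hk : k ≤ a) :
    psum (Fin.append q r) k = psum q k := by
  rw [psum_append, Nat.sub_eq_zero_of_le hk, psum_zero, add_zero]

theorem psum_append_of_ge {a b : ℕ} (q : Fin a → Bool) (r : Fin b → Bool) {k : ℕ} (hk : a ≤ k) :
    psum (Fin.append q r) k = psum q a + psum r (k - a) := by
  rw [psum_append, psum_of_length_le q hk]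

theorem psum_length (p : Fin l → Bool) : psum p l = 2 * #{i | p i} - l := by
  rw [psum_eq_sum_ite]
  simp only [Fin.is_lt, if_true]
  rw [sum_ite, sum_const, sum_const]
  have h := card_filter_add_card_filter_not (s := univ) (fun i : Fin l => p i = true)
  rw [card_univ, Fintype.card_fin] at h
  simp only [nsmul_eq_mul, mul_one, mul_neg]
  omega

theorem two_dvd_of_psum_length_eq_zero {p : Fin l → Bool} (h : psum p l = 0) : 2 ∣ l := by
  rw [psum_length] at h
  omega

def IsFirstZeroAt (p : Fin l → Bool) (t : ℕ) : Prop :=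
  0 < t ∧ t ≤ l ∧ psum p t = 0 ∧ ∀ k, 0 < k → k < t → psum p k ≠ 0

def IsFirstReturn (p : Fin l → Bool) : Prop :=
  IsFirstZeroAt p l

def IsZeroFree (p : Fin l → Bool) : Prop :=
  ∀ k, 0 < k → k ≤ l → psum p k ≠ 0

theorem IsZeroFree.isEvenZeroed {p : Fin l → Bool} (hp : IsZeroFree p) : IsEvenZeroed p := by
  intro k hk hz
  rcases Nat.eq_zero_or_pos k with rfl | hk0
  · exact dvd_zero 4
  · exact absurd hz (hp k hk0 hk)

theorem IsFirstZeroAt.unique {p : Fin l → Bool} {s t : ℕ} (hs : IsFirstZeroAt p s)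
    (ht : IsFirstZeroAt p t) : s = t := by
  by_contra hne
  rcases Nat.lt_or_gt_of_ne hne with h | h
  · exact ht.2.2.2 s hs.1 h hs.2.2.1
  · exact hs.2.2.2 t ht.1 h ht.2.2.1

theorem not_isZeroFree_iff {p : Fin l → Bool} : ¬ IsZeroFree p ↔ ∃ t, IsFirstZeroAt p t := by
  constructor
  · intro h
    have hex : ∃ k, 0 < k ∧ k ≤ l ∧ psum p k = 0 := by
      simpa [IsZeroFree] using h
    classical
    refine ⟨Nat.find hex, (Nat.find_spec hex).1, (Nat.find_spec hex).2.1,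
      (Nat.find_spec hex).2.2, fun k hk hlt hz => ?_⟩
    exact Nat.find_min hex hlt ⟨hk, hlt.le.trans (Nat.find_spec hex).2.1, hz⟩
  · rintro ⟨t, ht0, htl, hz, -⟩ h
    exact h t ht0 htl hz

theorem isFirstZeroAt_append_iff {a b : ℕ} (q : Fin a → Bool) (r : Fin b → Bool) :
    IsFirstZeroAt (Fin.append q r) a ↔ IsFirstReturn q := by
  have hpre : ∀ k ≤ a, psum (Fin.append q r) k = psum q k := fun _ => psum_append_of_le q r
  unfold IsFirstReturn IsFirstZeroAt
  constructor
  · rintro ⟨h0, -, hz, hmin⟩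
    exact ⟨h0, le_rfl, hpre a le_rfl ▸ hz, fun k hk hlt => hpre k hlt.le ▸ hmin k hk hlt⟩
  · rintro ⟨h0, -, hz, hmin⟩
    exact ⟨h0, Nat.le_add_right a b, (hpre a le_rfl).trans hz,
      fun k hk hlt => (hpre k hlt.le).trans_ne (hmin k hk hlt)⟩

end Paths

section Decomposition

variable {P : (l : ℕ) → (Fin l → Bool) → Prop} {A : ℕ → Prop}

def SplitsAtFirstReturn (P : (l : ℕ) → (Fin l → Bool) → Prop) (A : ℕ → Prop) : Prop :=
  ∀ a b (q : Fin a → Bool) (r : Fin b → Bool), IsFirstReturn q →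
    (P (a + b) (Fin.append q r) ↔ A a ∧ P b r)

theorem card_isFirstZeroAt (hP : SplitsAtFirstReturn P A) (a b : ℕ) :
    Nat.card {p : Fin (a + b) → Bool // P (a + b) p ∧ IsFirstZeroAt p a} =
      Nat.card {q : Fin a → Bool // IsFirstReturn q ∧ A a} *
        Nat.card {r : Fin b → Bool // P b r} := by
  rw [← Nat.card_prod]
  refine Nat.card_congr (((Fin.appendEquiv a b).subtypeEquiv fun x => ?_).symm.trans
    Equiv.subtypeProdEquivProd)
  obtain ⟨q, r⟩ := x
  change _ ↔ P (a + b) (Fin.append q r) ∧ IsFirstZeroAt (Fin.append q r) a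
  rw [isFirstZeroAt_append_iff]
  constructor
  · rintro ⟨⟨hq, hA⟩, hr⟩
    exact ⟨(hP a b _ _ hq).2 ⟨hA, hr⟩, hq⟩
  · rintro ⟨hp, hq⟩
    exact ⟨⟨hq, ((hP a b _ _ hq).1 hp).1⟩, ((hP a b _ _ hq).1 hp).2⟩

theorem card_not_isZeroFree (L : ℕ) :
    Nat.card {p : Fin L → Bool // P L p ∧ ¬ IsZeroFree p} =
      ∑ t ∈ range (L + 1), Nat.card {p : Fin L → Bool // P L p ∧ IsFirstZeroAt p t} := by
  classical
  simp only [Nat.card_eq_fintype_card, Fintype.card_subtype]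
  rw [← card_biUnion]
  · congr 1
    ext p
    simp only [mem_filter, mem_univ, true_and, mem_biUnion, mem_range, not_isZeroFree_iff]
    constructor
    · rintro ⟨hp, t, ht⟩
      exact ⟨t, Nat.lt_succ_of_le ht.2.1, hp, ht⟩
    · rintro ⟨t, -, hp, ht⟩
      exact ⟨hp, t, ht⟩
  · intro s _ t _ hst
    exact disjoint_filter.2 fun p _ hs ht => hst (hs.2.unique ht.2)

theorem card_eq_card_isZeroFree_add_sum (hP : SplitsAtFirstReturn P A) (L : ℕ) :
    Nat.card {p : Fin L → Bool // P L p} =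
      Nat.card {p : Fin L → Bool // P L p ∧ IsZeroFree p} +
        ∑ t ∈ range (L + 1), Nat.card {q : Fin t → Bool // IsFirstReturn q ∧ A t} *
          Nat.card {r : Fin (L - t) → Bool // P (L - t) r} := by
  classical
  have hsplit : Nat.card {p : Fin L → Bool // P L p} =
      Nat.card {p : Fin L → Bool // P L p ∧ IsZeroFree p} +
        Nat.card {p : Fin L → Bool // P L p ∧ ¬ IsZeroFree p} := by
    simp only [Nat.card_eq_fintype_card, Fintype.card_subtype, ← filter_filter]
    exact (card_filter_add_card_filter_not _).symm
  rw [hsplit, card_not_isZeroFree]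
  congr 1
  refine sum_congr rfl fun t ht => ?_
  obtain ⟨b, rfl⟩ := Nat.exists_eq_add_of_le (Nat.lt_succ_iff.1 (mem_range.1 ht))
  rw [Nat.add_sub_cancel_left, card_isFirstZeroAt hP]

noncomputable def pathSeries (P : (l : ℕ) → (Fin l → Bool) → Prop) : ℤ⟦X⟧ :=
  mk fun l => (Nat.card {p : Fin l → Bool // P l p} : ℤ)

theorem pathSeries_eq_add_mul (hP : SplitsAtFirstReturn P A) :
    pathSeries P = pathSeries (fun l p => P l p ∧ IsZeroFree p) +
      pathSeries (fun l q => IsFirstReturn q ∧ A l) * pathSeries P := by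
  ext L
  rw [map_add, coeff_mul, Finset.Nat.sum_antidiagonal_eq_sum_range_succ_mk]
  simp only [pathSeries, coeff_mk]
  exact_mod_cast card_eq_card_isZeroFree_add_sum hP L

end Decomposition

theorem card_isBalanced (k : ℕ) :
    Nat.card {p : Fin (2 * k) → Bool // IsBalanced p} = k.centralBinom := by
  let e : Finset (Fin (2 * k)) ≃ (Fin (2 * k) → Bool) :=
    { toFun s i := decide (i ∈ s)
      invFun p := {i | p i}
      left_inv s := by ext; simp
      right_inv p := by funext i; simp }
  have he : ∀ s : Finset (Fin (2 * k)), s.card = k ↔ IsBalanced (e s) := fun s => by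
    have hs : #{i | e s i} = s.card := by simp [e]
    rw [IsBalanced, psum_length, hs]
    omega
  rw [← Nat.card_congr (e.subtypeEquiv he), Nat.card_eq_fintype_card, Fintype.card_finset_len,
    Fintype.card_fin, Nat.centralBinom]

theorem card_isFirstReturn_of_not_two_dvd {l : ℕ} (hl : ¬ 2 ∣ l) :
    Nat.card {p : Fin l → Bool // IsFirstReturn p} = 0 :=
  have : IsEmpty {p : Fin l → Bool // IsFirstReturn p} :=
    ⟨fun p => hl (two_dvd_of_psum_length_eq_zero p.2.2.2.1)⟩
  Nat.card_of_isEmpty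

theorem splitsAtFirstReturn_true : SplitsAtFirstReturn (fun _ _ => True) (fun _ => True) :=
  fun _ _ _ _ _ => by simp

theorem splitsAtFirstReturn_isBalanced :
    SplitsAtFirstReturn (fun _ p => IsBalanced p) (fun _ => True) := by
  intro a b q r hq
  simp only [IsBalanced, true_and]
  rw [psum_append_of_ge q r (Nat.le_add_right a b), hq.2.2.1, zero_add, Nat.add_sub_cancel_left]

theorem splitsAtFirstReturn_isEvenZeroed :
    SplitsAtFirstReturn (fun _ p => IsEvenZeroed p) (4 ∣ ·) := by
  intro a b q r hq
  obtain ⟨ha, -, hqa, hmin⟩ := hq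
  constructor
  · intro h
    have h4a : 4 ∣ a := h a (by omega) (by rw [psum_append_of_le q r le_rfl, hqa])
    refine ⟨h4a, fun j hj hz => ?_⟩
    have := h (a + j) (by omega)
      (by rw [psum_append_of_ge q r (by omega), hqa, Nat.add_sub_cancel_left, hz, add_zero])
    omega
  · rintro ⟨h4a, hr⟩ k hk hz
    rcases le_or_gt k a with hka | hka
    · rw [psum_append_of_le q r hka] at hz
      rcases Nat.eq_zero_or_pos k with rfl | hk0
      · exact dvd_zero 4
      · obtain rfl : k = a := by
          by_contra hne
          exact hmin k hk0 (by omega) hz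
        exact h4a
    · rw [psum_append_of_ge q r hka.le, hqa, zero_add] at hz
      have := hr (k - a) (by omega) hz
      omega

noncomputable def firstReturnSeries : ℤ⟦X⟧ := pathSeries fun _ q => IsFirstReturn q

theorem expand_contract_firstReturnSeries :
    expand 2 two_ne_zero (contract 2 firstReturnSeries) = firstReturnSeries :=
  expand_contract _ fun n hn => by
    simp [firstReturnSeries, pathSeries, card_isFirstReturn_of_not_two_dvd hn]

theorem constantCoeff_firstReturnSeries : constantCoeff firstReturnSeries = 0 := by
  have : IsEmpty {q : Fin 0 → Bool // IsFirstReturn q} := ⟨fun q => q.2.1.false⟩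
  simp [firstReturnSeries, pathSeries, ← coeff_zero_eq_constantCoeff_apply]

theorem pathSeries_isBalanced :
    pathSeries (fun _ p => IsBalanced p) = expand 2 two_ne_zero centralBinomSeries := by
  ext l
  rw [coeff_expand]
  split_ifs with hl
  · obtain ⟨k, rfl⟩ := hl
    simp [pathSeries, centralBinomSeries, card_isBalanced]
  · have : IsEmpty {p : Fin l → Bool // IsBalanced p} :=
      ⟨fun p => hl (two_dvd_of_psum_length_eq_zero p.2)⟩
    simp [pathSeries]

theorem pathSeries_isBalanced_and_isZeroFree :
    pathSeries (fun _ p => IsBalanced p ∧ IsZeroFree p) = 1 := by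
  ext l
  rw [coeff_one]
  split_ifs with hl
  · subst hl
    have h : ∀ p : Fin 0 → Bool, IsBalanced p ∧ IsZeroFree p :=
      fun p => ⟨psum_zero p, fun k hk hk0 => by omega⟩
    simp [pathSeries, Nat.card_congr (Equiv.subtypeUnivEquiv h)]
  · have : IsEmpty {p : Fin l → Bool // IsBalanced p ∧ IsZeroFree p} :=
      ⟨fun p => p.2.2 l (Nat.pos_of_ne_zero hl) le_rfl p.2.1⟩
    simp [pathSeries]

theorem one_sub_contract_two_firstReturnSeries_mul :
    (1 - contract 2 firstReturnSeries) * centralBinomSeries = 1 := by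
  have h := pathSeries_eq_add_mul splitsAtFirstReturn_isBalanced
  simp only [and_true] at h
  rw [pathSeries_isBalanced_and_isZeroFree, pathSeries_isBalanced, ← firstReturnSeries,
    ← expand_contract_firstReturnSeries, ← map_one (expand 2 two_ne_zero), ← map_mul,
    ← map_add] at h
  have h2 := congrArg (contract 2) h
  rw [contract_expand, contract_expand] at h2
  linear_combination h2

theorem pathSeries_true : pathSeries (fun _ _ => True) = mk fun l => (2 : ℤ) ^ l := by
  ext l
  simp [pathSeries]

theorem contract_two_pathSeries_isZeroFree :
    contract 2 (pathSeries fun _ p => IsZeroFree p) = centralBinomSeries := by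
  have h := pathSeries_eq_add_mul splitsAtFirstReturn_true
  simp only [true_and, and_true] at h
  rw [← firstReturnSeries, ← expand_contract_firstReturnSeries, pathSeries_true] at h
  have hA : contract 2 (mk fun l => (2 : ℤ) ^ l) = centralBinomSeries ^ 2 := by
    rw [← mk_four_pow_eq_centralBinomSeries_sq]
    ext n
    simp [pow_mul]
  have h2 := congrArg (contract 2) h
  rw [map_add, contract_expand_mul, hA] at h2
  linear_combination -h2 + centralBinomSeries * one_sub_contract_two_firstReturnSeries_mul

theorem pathSeries_isFirstReturn_four_dvd :
    pathSeries (fun l q => IsFirstReturn q ∧ 4 ∣ l) =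
      expand 4 four_ne_zero (contract 4 firstReturnSeries) := by
  ext l
  rw [coeff_expand]
  split_ifs with hl
  · simp [pathSeries, firstReturnSeries, hl, Nat.mul_div_cancel' hl]
  · simp [pathSeries, hl]

theorem one_sub_contract_four_firstReturnSeries_mul :
    (1 - contract 4 firstReturnSeries) * rescale 4 centralBinomSeries =
      contract 2 centralBinomSeries := by
  have h := congrArg (· * rescale (-1) centralBinomSeries)
    one_sub_contract_two_firstReturnSeries_mul
  simp only [mul_assoc, centralBinomSeries_mul_rescale_neg_one, one_mul] at h
  have h2 := congrArg (contract 2) h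
  rw [mul_comm, contract_expand_mul, contract_rescale, map_sub, contract_one two_ne_zero,
    contract_contract] at h2
  norm_num [rescale_one] at h2
  linear_combination h2

theorem contract_four_pathSeries_isEvenZeroed :
    contract 4 (pathSeries fun _ p => IsEvenZeroed p) = rescale 4 centralBinomSeries := by
  have h := pathSeries_eq_add_mul splitsAtFirstReturn_isEvenZeroed
  have hzf : (pathSeries fun _ p => IsEvenZeroed p ∧ IsZeroFree p) =
      pathSeries fun _ p => IsZeroFree p := by
    simp only [and_iff_right_of_imp IsZeroFree.isEvenZeroed]
  rw [hzf, pathSeries_isFirstReturn_four_dvd] at h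
  have h4 := congrArg (contract 4) h
  have hU : contract 4 (pathSeries fun _ p => IsZeroFree p) = contract 2 centralBinomSeries := by
    rw [← contract_two_pathSeries_isZeroFree, contract_contract]
  rw [map_add, contract_expand_mul, hU] at h4
  have hne : (1 - contract 4 firstReturnSeries : ℤ⟦X⟧) ≠ 0 := fun h0 => by
    have := congrArg constantCoeff h0
    simp [constantCoeff_firstReturnSeries] at this
  refine mul_left_cancel₀ hne ?_
  linear_combination h4 - one_sub_contract_four_firstReturnSeries_mul

/-- For every nonnegative integer `n`, the number of even-zeroed paths of length `4n`
equals `4^n · B_n`. -/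
theorem card_evenZeroed_eq_pow_mul_centralBinom (n : ℕ) :
    Nat.card {p : Fin (4 * n) → Bool // IsEvenZeroed p} =
      4 ^ n * Nat.centralBinom n := by
  have h := congrArg (coeff n) contract_four_pathSeries_isEvenZeroed
  simp only [coeff_contract, pathSeries, coeff_mk, coeff_rescale, centralBinomSeries] at h
  exact_mod_cast h
end

section
/- For every nonnegative integer n, the sum over all pairs of nonnegative integers (i, j) with i + j = n of B_{2i} · B_{2j}, minus the sum over all pairs of nonnegative integers (i, j) with i + j = n and j ≥ 1 of B_{2i+1} · B_{2j−1}, equals the sum over all pairs of nonnegative integers (i, j) with i + j = n of C_{2i} · B_{2j}. -/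
/-!
Write `a` and `b` for the even–even and odd–odd halves of the convolution
`∑_{i+j=2n} B_i B_j`, so that the left-hand side is `a - b`. Squaring the generating function
`(1 - 4x)^{-1/2}` of the `B_k` gives `∑_{i+j=m} B_i B_j = 4^m`. At `m = 2n` this says
`a + b = 16^n`; at `m = 2n + 1`, where the two halves are exchanged by `i ↔ j`, it says
`∑_{i+j=n} B_{2i+1} B_{2j} = 2 · 16^n`. Since `2 C_k = 4 B_k - B_{k+1}`, twice the right-hand
side is `4a - 2 · 16^n = 2(a - b)`.
-/

open Finset

theorem Finset.Nat.two_mul_sum_antidiagonal_fst_mul {R : Type*} [CommSemiring R]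
    (f : ℕ × ℕ → R) (hf : ∀ p, f p.swap = f p) (m : ℕ) :
    2 * ∑ p ∈ antidiagonal m, (p.1 : R) * f p = m * ∑ p ∈ antidiagonal m, f p := by
  have hswap :
      ∑ p ∈ antidiagonal m, (p.1 : R) * f p = ∑ p ∈ antidiagonal m, (p.2 : R) * f p := by
    rw [← Nat.sum_antidiagonal_swap]; simp only [Prod.fst_swap, hf]
  rw [two_mul]; nth_rw 2 [hswap]; rw [← sum_add_distrib, mul_sum]
  refine sum_congr rfl fun p hp => ?_
  rw [← add_mul, ← Nat.cast_add, HasAntidiagonal.mem_antidiagonal.mp hp]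

theorem Finset.Nat.sum_antidiagonal_two_mul {M : Type*} [AddCommMonoid M]
    (f : ℕ × ℕ → M) (n : ℕ) :
    ∑ p ∈ antidiagonal (2 * n), f p =
      ∑ p ∈ antidiagonal n, f (2 * p.1, 2 * p.2) +
        ∑ p ∈ (antidiagonal n).filter (fun p => 1 ≤ p.2), f (2 * p.1 + 1, 2 * p.2 - 1) := by
  rw [← sum_filter_add_sum_filter_not _ (fun p => Even p.1)]
  congr 1
  · refine (sum_nbij' (fun p => (2 * p.1, 2 * p.2)) (fun p => (p.1 / 2, p.2 / 2))
      ?_ ?_ ?_ ?_ fun _ _ => rfl).symm <;>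
      simp only [mem_filter, HasAntidiagonal.mem_antidiagonal, Nat.even_iff, Prod.forall,
        Prod.mk.injEq] <;> omega
  · refine (sum_nbij' (fun p => (2 * p.1 + 1, 2 * p.2 - 1)) (fun p => (p.1 / 2, (p.2 + 1) / 2))
      ?_ ?_ ?_ ?_ fun _ _ => rfl).symm <;>
      simp only [mem_filter, HasAntidiagonal.mem_antidiagonal, Nat.even_iff, Prod.forall,
        Prod.mk.injEq] <;> omega

theorem Finset.Nat.sum_antidiagonal_two_mul_add_one {M : Type*} [AddCommMonoid M]
    (f : ℕ × ℕ → M) (n : ℕ) :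
    ∑ p ∈ antidiagonal (2 * n + 1), f p =
      ∑ p ∈ antidiagonal n, f (2 * p.1, 2 * p.2 + 1) +
        ∑ p ∈ antidiagonal n, f (2 * p.1 + 1, 2 * p.2) := by
  rw [← sum_filter_add_sum_filter_not _ (fun p => Even p.1)]
  congr 1
  · refine (sum_nbij' (fun p => (2 * p.1, 2 * p.2 + 1)) (fun p => (p.1 / 2, p.2 / 2))
      ?_ ?_ ?_ ?_ fun _ _ => rfl).symm <;>
      simp only [mem_filter, HasAntidiagonal.mem_antidiagonal, Nat.even_iff, Prod.forall,
        Prod.mk.injEq] <;> omega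
  · refine (sum_nbij' (fun p => (2 * p.1 + 1, 2 * p.2)) (fun p => (p.1 / 2, p.2 / 2))
      ?_ ?_ ?_ ?_ fun _ _ => rfl).symm <;>
      simp only [mem_filter, HasAntidiagonal.mem_antidiagonal, Nat.even_iff, Prod.forall,
        Prod.mk.injEq] <;> omega

namespace Nat

theorem sum_antidiagonal_succ_fst_mul_centralBinom_mul (m : ℕ) :
    ∑ p ∈ antidiagonal (m + 1), p.1 * (p.1.centralBinom * p.2.centralBinom) =
      2 * ∑ p ∈ antidiagonal m, (2 * p.1 + 1) * (p.1.centralBinom * p.2.centralBinom) := by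
  rw [Finset.Nat.sum_antidiagonal_succ, zero_mul, zero_add, mul_sum]
  refine sum_congr rfl fun p _ => ?_
  rw [← mul_assoc, succ_mul_centralBinom_succ]
  ring

/- With `A m = ∑_{i+j=m} B_i B_j` and `V m = ∑_{i+j=m} i B_i B_j`, symmetry gives
`2 V m = m A m` and `(i + 1) B_{i+1} = (4i + 2) B_i` gives `V (m + 1) = 4 V m + 2 A m`,
so `A (m + 1) = 4 A m`. -/
theorem sum_antidiagonal_centralBinom_mul_centralBinom (m : ℕ) :
    ∑ p ∈ antidiagonal m, p.1.centralBinom * p.2.centralBinom = 4 ^ m := by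
  have hsymm (k : ℕ) : 2 * ∑ p ∈ antidiagonal k, p.1 * (p.1.centralBinom * p.2.centralBinom) =
      k * ∑ p ∈ antidiagonal k, p.1.centralBinom * p.2.centralBinom :=
    Finset.Nat.two_mul_sum_antidiagonal_fst_mul _ (fun p => mul_comm _ _) k
  induction m with
  | zero => simp
  | succ m ih =>
    refine Nat.eq_of_mul_eq_mul_left (by omega : 0 < m + 1) ?_
    calc (m + 1) * ∑ p ∈ antidiagonal (m + 1), p.1.centralBinom * p.2.centralBinom
        = 4 * (2 * ∑ p ∈ antidiagonal m, p.1 * (p.1.centralBinom * p.2.centralBinom) +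
            ∑ p ∈ antidiagonal m, p.1.centralBinom * p.2.centralBinom) := by
          rw [← hsymm, sum_antidiagonal_succ_fst_mul_centralBinom_mul]
          simp only [mul_sum, ← sum_add_distrib]
          exact sum_congr rfl fun p _ => by ring
      _ = (m + 1) * 4 ^ (m + 1) := by rw [hsymm, ih]; ring

theorem two_mul_catalan_add_centralBinom_succ (k : ℕ) :
    2 * catalan k + (k + 1).centralBinom = 4 * k.centralBinom := by
  refine Nat.eq_of_mul_eq_mul_left (by omega : 0 < k + 1) ?_
  linear_combination 2 * succ_mul_catalan_eq_centralBinom k + succ_mul_centralBinom_succ k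

theorem two_mul_sum_antidiagonal_centralBinom_odd_mul_even (n : ℕ) :
    2 * ∑ p ∈ antidiagonal n, (2 * p.1 + 1).centralBinom * (2 * p.2).centralBinom =
      4 * 16 ^ n := by
  have hswap : ∑ p ∈ antidiagonal n, (2 * p.1).centralBinom * (2 * p.2 + 1).centralBinom =
      ∑ p ∈ antidiagonal n, (2 * p.1 + 1).centralBinom * (2 * p.2).centralBinom := by
    rw [← Finset.Nat.sum_antidiagonal_swap]
    exact sum_congr rfl fun p _ => mul_comm _ _
  have h := Finset.Nat.sum_antidiagonal_two_mul_add_one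
    (fun p => p.1.centralBinom * p.2.centralBinom) n
  dsimp only at h
  rw [sum_antidiagonal_centralBinom_mul_centralBinom, hswap, pow_succ, pow_mul] at h
  norm_num at h
  omega

end Nat

/-- For every nonnegative integer `n`,
`∑_{i+j=n} B_{2i} B_{2j} − ∑_{i+j=n, j≥1} B_{2i+1} B_{2j−1} = ∑_{i+j=n} C_{2i} B_{2j}`. -/
theorem alternating_convolution_eq_catalan_convolution (n : ℕ) :
    (∑ ij ∈ Finset.HasAntidiagonal.antidiagonal n,
        (Nat.centralBinom (2 * ij.1) * Nat.centralBinom (2 * ij.2) : ℤ)) -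
      ∑ ij ∈ (Finset.HasAntidiagonal.antidiagonal n).filter (fun ij => 1 ≤ ij.2),
        (Nat.centralBinom (2 * ij.1 + 1) * Nat.centralBinom (2 * ij.2 - 1) : ℤ) =
      ∑ ij ∈ Finset.HasAntidiagonal.antidiagonal n,
        (catalan (2 * ij.1) * Nat.centralBinom (2 * ij.2) : ℤ) := by
  set a := ∑ p ∈ antidiagonal n, (2 * p.1).centralBinom * (2 * p.2).centralBinom
  set b := ∑ p ∈ (antidiagonal n).filter (fun p => 1 ≤ p.2),
    (2 * p.1 + 1).centralBinom * (2 * p.2 - 1).centralBinom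
  set c := ∑ p ∈ antidiagonal n, catalan (2 * p.1) * (2 * p.2).centralBinom
  set d := ∑ p ∈ antidiagonal n, (2 * p.1 + 1).centralBinom * (2 * p.2).centralBinom
  have hab : a + b = 16 ^ n := by
    rw [← Finset.Nat.sum_antidiagonal_two_mul (fun p => p.1.centralBinom * p.2.centralBinom),
      Nat.sum_antidiagonal_centralBinom_mul_centralBinom, pow_mul]
    norm_num
  have hd : 2 * d = 4 * 16 ^ n := Nat.two_mul_sum_antidiagonal_centralBinom_odd_mul_even n
  have hcd : 2 * c + d = 4 * a := by
    simp only [c, d, a, mul_sum, ← sum_add_distrib]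
    refine sum_congr rfl fun p _ => ?_
    rw [← mul_assoc, ← add_mul, Nat.two_mul_catalan_add_centralBinom_succ, mul_assoc]
  have hcba : c + b = a := by omega
  have h := congrArg (Nat.cast : ℕ → ℤ) hcba
  push_cast [a, b, c] at h
  linarith
end
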